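/- Let n ≥ 2 and R = ℤ[x_1, x_2, ...]. In the quotient ring R/(s_n, s_{n+1}, ...), the elements x_n, x_{n+1}, x_{n+2}, ... lie in the subring generated by x_1, ..., x_{n-1}; that is, the quotient is generated as a ring by the images of x_1, ..., x_{n-1}. -/
import Mathlib


open MvPolynomial

/-- The `i`-th Newton polynomial `s_i ∈ R[x_1, x_2, …]`, defined by the recursion
`s_i = x_1 s_{i-1} - x_2 s_{i-2} + ⋯ + (-1)^{i-1} i x_i` (and `s_0 = 0`). -/
noncomputable def newtonPoly (R : Type) [CommRing R] : ℕ → MvPolynomial ℕ+ R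
  | 0 => 0
  | (i + 1) =>
      (∑ j ∈ Finset.range i,
        (-1 : MvPolynomial ℕ+ R) ^ j * (X (⟨j + 1, j.succ_pos⟩ : ℕ+) : MvPolynomial ℕ+ R) *
          newtonPoly R (i - j))
      + (-1) ^ i * ((i : MvPolynomial ℕ+ R) + 1) * (X (⟨i + 1, i.succ_pos⟩ : ℕ+) : MvPolynomial ℕ+ R)
  decreasing_by omega

/-- Auxiliary lemma. -/
lemma newton_mem (I : Ideal (MvPolynomial ℕ+ ℚ))
    (A : Subalgebra ℚ (MvPolynomial ℕ+ ℚ ⧸ I)) (k : ℕ)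
    (h : ∀ j : ℕ+, (j : ℕ) ≤ k → Ideal.Quotient.mk I (X j) ∈ A) :
    Ideal.Quotient.mk I (newtonPoly ℚ k) ∈ A := by
  induction k using Nat.strong_induction_on with
  | _ k ih =>
    match k, h with
    | 0, h => simpa [newtonPoly] using zero_mem A
    | (i+1), h =>
      rw [newtonPoly, map_add]
      apply add_mem
      · rw [map_sum]
        apply Subalgebra.sum_mem
        intro j hj
        simp only [Finset.mem_range] at hj
        rw [map_mul, map_mul, map_pow, map_neg, map_one]
        refine mul_mem (mul_mem (pow_mem (neg_mem (one_mem A)) j) ?_) ?_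
        · exact h ⟨j+1, j.succ_pos⟩ (by simp; omega)
        · exact ih (i - j) (by omega) (fun l hl => h l (by omega))
      · rw [map_mul, map_mul, map_pow, map_neg, map_one, map_add, map_natCast, map_one]
        refine mul_mem (mul_mem (pow_mem (neg_mem (one_mem A)) i)
          (add_mem (A.natCast_mem i) (one_mem A))) (h ⟨i+1, i.succ_pos⟩ (le_refl _))

/-- In `ℚ[x_1, x_2, …]/(s_n, s_{n+1}, …)`, the images of `x_n, x_{n+1}, …` lie in the
`ℚ`-subalgebra generated by the images of `x_1, …, x_{n-1}`. -/
theorem newton_quotient_generated_low_degree (n : ℕ) (hn : 2 ≤ n) (i : ℕ+) (hi : n ≤ (i : ℕ)) :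
    Ideal.Quotient.mk (Ideal.span (Set.range fun j : ℕ => newtonPoly ℚ (n + j))) (X i)
      ∈ Algebra.adjoin ℚ
        ((fun j : ℕ+ =>
            Ideal.Quotient.mk
              (Ideal.span (Set.range fun j : ℕ => newtonPoly ℚ (n + j))) (X j)) ''
          {j : ℕ+ | (j : ℕ) < n}) := by
  set I := Ideal.span (Set.range fun j : ℕ => newtonPoly ℚ (n + j)) with hI
  set A := Algebra.adjoin ℚ
      ((fun j : ℕ+ => Ideal.Quotient.mk I (X j)) '' {j : ℕ+ | (j : ℕ) < n}) with hA
  clear hi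
  suffices H : ∀ m : ℕ, ∀ i : ℕ+, (i : ℕ) = m → Ideal.Quotient.mk I (X i) ∈ A by
    exact H i i rfl
  intro m
  induction m using Nat.strong_induction_on with
  | _ m ih =>
    intro i him
    by_cases hlt : (i : ℕ) < n
    · exact Algebra.subset_adjoin ⟨i, hlt, rfl⟩
    · push_neg at hlt
      obtain ⟨k, rfl⟩ : ∃ k, m = k + 1 := ⟨m - 1, by omega⟩
      have hieq : i = (⟨k + 1, k.succ_pos⟩ : ℕ+) := PNat.coe_injective (by simpa using him)
      subst hieq
      have hnk : n ≤ k + 1 := by simpa using hlt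
      have hs : Ideal.Quotient.mk I (newtonPoly ℚ (k + 1)) = 0 := by
        rw [Ideal.Quotient.eq_zero_iff_mem, hI]
        exact Ideal.subset_span ⟨k + 1 - n, by show newtonPoly ℚ (n + (k + 1 - n)) = _; rw [Nat.add_sub_cancel' hnk]⟩
      rw [newtonPoly, map_add] at hs
      set S := Ideal.Quotient.mk I
        (∑ j ∈ Finset.range k,
          (-1 : MvPolynomial ℕ+ ℚ) ^ j * (X (⟨j + 1, j.succ_pos⟩ : ℕ+) : MvPolynomial ℕ+ ℚ) *
            newtonPoly ℚ (k - j)) with hS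
      have hSA : S ∈ A := by
        rw [hS, map_sum]
        apply Subalgebra.sum_mem
        intro j hj
        simp only [Finset.mem_range] at hj
        rw [map_mul, map_mul, map_pow, map_neg, map_one]
        refine mul_mem (mul_mem (pow_mem (neg_mem (one_mem A)) j) ?_) ?_
        · exact ih (j + 1) (by omega) ⟨j + 1, j.succ_pos⟩ rfl
        · exact newton_mem I A (k - j) (fun l hl => ih l (by omega) l rfl)
      -- isolate X
      have hc : Ideal.Quotient.mk I
          ((-1 : MvPolynomial ℕ+ ℚ) ^ k * ((k : MvPolynomial ℕ+ ℚ) + 1) *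
            (X (⟨k + 1, k.succ_pos⟩ : ℕ+) : MvPolynomial ℕ+ ℚ))
          = ((-1 : ℚ) ^ k * ((k : ℚ) + 1)) •
            Ideal.Quotient.mk I (X (⟨k + 1, k.succ_pos⟩ : ℕ+)) := by
        rw [← Ideal.Quotient.mkₐ_eq_mk ℚ I, ← map_smul]
        congr 1
        rw [MvPolynomial.smul_eq_C_mul]
        simp only [map_mul, map_pow, map_neg, map_one, map_add, map_natCast]
      rw [hc] at hs
      have hcne : ((-1 : ℚ) ^ k * ((k : ℚ) + 1)) ≠ 0 := by positivity
      have hy : ((-1 : ℚ) ^ k * ((k : ℚ) + 1)) •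
          Ideal.Quotient.mk I (X (⟨k + 1, k.succ_pos⟩ : ℕ+)) = -S :=
        eq_neg_of_add_eq_zero_right hs
      have : Ideal.Quotient.mk I (X (⟨k + 1, k.succ_pos⟩ : ℕ+))
          = ((-1 : ℚ) ^ k * ((k : ℚ) + 1))⁻¹ • (-S) := by
        rw [← hy, inv_smul_smul₀ hcne]
      rw [this]
      exact A.smul_mem (A.neg_mem hSA) _
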